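/- arXiv:2211.08389 — 4 statements merged into one kernel-verified Lean document; each statement's English description precedes it below -/
import Mathlib

section
/- Let S = [[A,B],[C,D]] be an invertible 2d×2d real matrix (block form, d×d blocks). Suppose Σ := AᵀΔ²A + Cᵀ E⁻²C is positive definite and Ω := BᵀΔ²B + Dᵀ E⁻²D − βΣ⁻¹βᵀ is positive definite, where Δ², E⁻² are positive definite symmetric d×d matrices and β := BᵀΔ²A + Dᵀ E⁻²C. Set f(x,ω) = exp(−π x·Δ²x − π ω·E⁻²ω). Then for all p,q ∈ [1,∞], ‖(x,ω) ↦ f(Ax+Bω, Cx+Dω)‖_{p,q} ≍ |det Σ|^{−1/(2p)} |det Ω|^{−1/(2q)}, with implied constants depending only on p,q,d. -/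
open MeasureTheory Matrix Real
open scoped ENNReal

/-- The mixed-norm `L^{p,q}` norm: `‖f‖_{p,q} = ‖ ω ↦ ‖f(·,ω)‖_{L^p} ‖_{L^q}`. -/
noncomputable def mixedNorm {d : ℕ} {E : Type*} [NormedAddCommGroup E]
    (p q : ℝ≥0∞) (f : (Fin d → ℝ) × (Fin d → ℝ) → E) : ℝ≥0∞ :=
  if q = ⊤ then essSup (fun ω => eLpNorm (fun x => f (x, ω)) p volume) volume
  else (∫⁻ ω, (eLpNorm (fun x => f (x, ω)) p volume) ^ q.toReal ∂volume) ^ (1 / q.toReal)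

variable {d : ℕ}

-- gaussian lintegral on pi space, standard
lemma lintegral_gauss_std {b : ℝ} (hb : 0 < b) :
    ∫⁻ v : Fin d → ℝ, ENNReal.ofReal (Real.exp (-b * ∑ i, v i ^ 2))
      = ENNReal.ofReal ((π / b) ^ ((d : ℝ) / 2)) := by
  have hint : Integrable (fun v : Fin d → ℝ => ∏ i, Real.exp (-b * v i ^ 2)) :=
    Integrable.fintype_prod (fun i => integrable_exp_neg_mul_sq hb)
  have heq : ∀ v : Fin d → ℝ, Real.exp (-b * ∑ i, v i ^ 2) = ∏ i, Real.exp (-b * v i ^ 2) := by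
    intro v
    rw [← Real.exp_sum]
    congr 1
    rw [Finset.mul_sum]
  simp_rw [heq]
  rw [← MeasureTheory.ofReal_integral_eq_lintegral_ofReal hint
    (Filter.Eventually.of_forall fun v => Finset.prod_nonneg fun i _ => (Real.exp_pos _).le)]
  rw [MeasureTheory.integral_fintype_prod_volume_eq_prod (f := fun (_ : Fin d) (x : ℝ) => Real.exp (-b * x ^ 2))]
  congr 1
  have : ∫ (x : ℝ), Real.exp (-b * x ^ 2) = Real.sqrt (π / b) := by
    simpa [neg_mul] using integral_gaussian b
  rw [Finset.prod_const, this, Finset.card_univ, Fintype.card_fin]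
  rw [← Real.rpow_natCast (Real.sqrt (π / b)) d, Real.sqrt_eq_rpow, ← Real.rpow_mul (by positivity)]
  ring_nf

open scoped MatrixOrder in
lemma lintegral_gauss_posdef {M : Matrix (Fin d) (Fin d) ℝ} (hM : M.PosDef) :
    ∫⁻ x : Fin d → ℝ, ENNReal.ofReal (Real.exp (-π * (x ⬝ᵥ M.mulVec x)))
      = ENNReal.ofReal (M.det ^ (-(1 : ℝ) / 2)) := by
  set N := CFC.sqrt M with hN
  have hNs : N.PosSemidef := (CFC.sqrt_nonneg M).posSemidef
  have hNN : N * N = M := CFC.sqrt_mul_sqrt_self M hM.posSemidef.nonneg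
  have hdetM : 0 < M.det := hM.det_pos
  have hdet2 : N.det * N.det = M.det := by rw [← Matrix.det_mul, hNN]
  have hdetN_nonneg : 0 ≤ N.det := by
    rw [hNs.isHermitian.det_eq_prod_eigenvalues]
    exact Finset.prod_nonneg fun i _ => hNs.eigenvalues_nonneg i
  have hdetN : N.det = Real.sqrt M.det := by
    rw [← hdet2]; exact (Real.sqrt_mul_self hdetN_nonneg).symm
  have hdetN_pos : 0 < N.det := by rw [hdetN]; exact Real.sqrt_pos.mpr hdetM
  have hquad : ∀ x : Fin d → ℝ, x ⬝ᵥ M.mulVec x = ∑ i, (N.mulVec x) i ^ 2 := by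
    intro x
    have h1 : x ⬝ᵥ M.mulVec x = (N.mulVec x) ⬝ᵥ (N.mulVec x) := by
      have hsym : Nᵀ = N := by
        rw [← Matrix.conjTranspose_eq_transpose_of_trivial, hNs.isHermitian.eq]
      rw [← hNN, ← Matrix.mulVec_mulVec, Matrix.dotProduct_mulVec, ← Matrix.mulVec_transpose,
        hsym]
    rw [h1]
    simp [dotProduct, pow_two]
  have hmeas : Measurable fun y : Fin d → ℝ => ENNReal.ofReal (Real.exp (-π * ∑ i, y i ^ 2)) := by
    apply ENNReal.measurable_ofReal.comp
    apply Continuous.measurable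
    continuity
  have hTmeas : Measurable (Matrix.toLin' N) :=
    LinearMap.continuous_of_finiteDimensional _ |>.measurable
  calc ∫⁻ x : Fin d → ℝ, ENNReal.ofReal (Real.exp (-π * (x ⬝ᵥ M.mulVec x)))
      = ∫⁻ x : Fin d → ℝ, ENNReal.ofReal (Real.exp (-π * ∑ i, (Matrix.toLin' N x) i ^ 2)) := by
        simp_rw [hquad, Matrix.toLin'_apply]
    _ = ∫⁻ y : Fin d → ℝ, ENNReal.ofReal (Real.exp (-π * ∑ i, y i ^ 2)) ∂(Measure.map (Matrix.toLin' N) volume) :=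
        (lintegral_map hmeas hTmeas).symm
    _ = ENNReal.ofReal |(N.det)⁻¹| * ∫⁻ y : Fin d → ℝ, ENNReal.ofReal (Real.exp (-π * ∑ i, y i ^ 2)) := by
        rw [Real.map_matrix_volume_pi_eq_smul_volume_pi hdetN_pos.ne', lintegral_smul_measure, smul_eq_mul]
    _ = ENNReal.ofReal (M.det ^ (-(1 : ℝ) / 2)) := by
        rw [lintegral_gauss_std pi_pos, div_self pi_pos.ne', Real.one_rpow, ENNReal.ofReal_one,
          mul_one]
        congr 1
        rw [abs_of_pos (inv_pos.mpr hdetN_pos), hdetN, Real.sqrt_eq_rpow,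
          ← Real.rpow_neg hdetM.le]
        norm_num

lemma posdef_smul {M : Matrix (Fin d) (Fin d) ℝ} (hM : M.PosDef) {r : ℝ} (hr : 0 < r) :
    (r • M).PosDef := by
  refine Matrix.PosDef.of_dotProduct_mulVec_pos ?_ (fun x hx => ?_)
  · unfold Matrix.IsHermitian
    rw [Matrix.conjTranspose_smul, hM.1]
    simp
  · rw [Matrix.smul_mulVec, dotProduct_smul, smul_eq_mul]
    exact mul_pos hr (hM.dotProduct_mulVec_pos hx)

lemma lintegral_gauss_scaled {M : Matrix (Fin d) (Fin d) ℝ} (hM : M.PosDef) {r : ℝ}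
    (hr : 0 < r) :
    ∫⁻ x : Fin d → ℝ, ENNReal.ofReal (Real.exp (-π * (x ⬝ᵥ M.mulVec x) * r))
      = ENNReal.ofReal (r ^ (-(d : ℝ) / 2) * M.det ^ (-(1 : ℝ) / 2)) := by
  have h := lintegral_gauss_posdef (posdef_smul hM hr)
  have heq : ∀ x : Fin d → ℝ, -π * (x ⬝ᵥ (r • M).mulVec x) = -π * (x ⬝ᵥ M.mulVec x) * r := by
    intro x
    rw [Matrix.smul_mulVec, dotProduct_smul, smul_eq_mul]
    ring
  simp_rw [heq] at h
  rw [h, Matrix.det_smul, Fintype.card_fin]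
  congr 1
  rw [Real.mul_rpow (by positivity) hM.det_pos.le, ← Real.rpow_natCast r d,
    ← Real.rpow_mul hr.le]
  ring_nf

lemma quad_nonneg {M : Matrix (Fin d) (Fin d) ℝ} (hM : M.PosDef) (x : Fin d → ℝ) :
    0 ≤ x ⬝ᵥ M.mulVec x := by
  have := hM.posSemidef.dotProduct_mulVec_nonneg x
  simpa using this

lemma essSup_gauss {M : Matrix (Fin d) (Fin d) ℝ} (hM : M.PosDef) :
    essSup (fun x : Fin d → ℝ => ENNReal.ofReal (Real.exp (-π * (x ⬝ᵥ M.mulVec x)))) volume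
      = 1 := by
  set f : (Fin d → ℝ) → ℝ≥0∞ := fun x => ENNReal.ofReal (Real.exp (-π * (x ⬝ᵥ M.mulVec x)))
    with hf
  have hle : ∀ x, f x ≤ 1 := by
    intro x
    rw [hf]
    simp only []
    rw [← ENNReal.ofReal_one]
    apply ENNReal.ofReal_le_ofReal
    rw [← Real.exp_zero]
    apply Real.exp_le_exp.mpr
    have := quad_nonneg hM x
    nlinarith [pi_pos]
  have hmv : Continuous fun x : Fin d → ℝ => M.mulVec x := by
    have : Continuous (Matrix.toLin' M) := LinearMap.continuous_of_finiteDimensional _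
    exact this.congr (fun x => Matrix.toLin'_apply M x)
  have hquadc : Continuous fun x : Fin d → ℝ => x ⬝ᵥ M.mulVec x := by
    apply continuous_finset_sum
    intro i _
    exact (continuous_apply i).mul ((continuous_apply i).comp hmv)
  have hcont : Continuous f :=
    ENNReal.continuous_ofReal.comp (Real.continuous_exp.comp (continuous_const.mul hquadc))
  refine le_antisymm (essSup_le_of_ae_le 1 (Filter.Eventually.of_forall hle)) ?_
  by_contra hlt
  push_neg at hlt
  have hae := ENNReal.ae_le_essSup (μ := volume) f
  set t := essSup f volume
  have hU : IsOpen {x | t < f x} := isOpen_lt continuous_const hcont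
  have h0 : (0 : Fin d → ℝ) ∈ {x | t < f x} := by
    have : f 0 = 1 := by simp [hf]
    simpa [this]
  have hpos : 0 < volume {x | t < f x} := hU.measure_pos volume ⟨0, h0⟩
  have hzero : volume {x | t < f x} = 0 := by
    have : {x | t < f x} ⊆ {x | ¬ f x ≤ t} := fun x hx => not_le.mpr hx
    exact measure_mono_null this hae
  exact hpos.ne' hzero

noncomputable def gaussConst (d : ℕ) (p : ℝ≥0∞) : ℝ :=
  if p = ⊤ then 1 else p.toReal ^ (-(d : ℝ) / (2 * p.toReal))

lemma gaussConst_pos {p : ℝ≥0∞} (hp : 1 ≤ p) : 0 < gaussConst d p := by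
  unfold gaussConst
  split_ifs with h
  · norm_num
  · have : 0 < p.toReal := ENNReal.toReal_pos (by intro h0; rw [h0] at hp; simp at hp) h
    positivity

lemma toReal_pos_of_one_le {p : ℝ≥0∞} (hp : 1 ≤ p) (hptop : p ≠ ⊤) : 0 < p.toReal :=
  ENNReal.toReal_pos (by intro h0; rw [h0] at hp; simp at hp) hptop

lemma eLpNorm_gauss {p : ℝ≥0∞} (hp : 1 ≤ p) {M : Matrix (Fin d) (Fin d) ℝ} (hM : M.PosDef) :
    eLpNorm (fun x : Fin d → ℝ => Real.exp (-π * (x ⬝ᵥ M.mulVec x))) p volume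
      = ENNReal.ofReal (gaussConst d p * M.det ^ (-(2 * p.toReal)⁻¹)) := by
  by_cases hptop : p = ⊤
  · subst hptop
    rw [eLpNorm_exponent_top, eLpNormEssSup]
    have : ∀ x : Fin d → ℝ, ‖Real.exp (-π * (x ⬝ᵥ M.mulVec x))‖ₑ
        = ENNReal.ofReal (Real.exp (-π * (x ⬝ᵥ M.mulVec x))) := fun x =>
      Real.enorm_eq_ofReal (Real.exp_pos _).le
    simp_rw [this]
    rw [essSup_gauss hM]
    simp [gaussConst]
  · have hp0 : p ≠ 0 := by intro h0; rw [h0] at hp; simp at hp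
    have hpr : 0 < p.toReal := toReal_pos_of_one_le hp hptop
    rw [eLpNorm_eq_lintegral_rpow_enorm_toReal hp0 hptop]
    have h1 : ∀ x : Fin d → ℝ, (‖Real.exp (-π * (x ⬝ᵥ M.mulVec x))‖ₑ) ^ p.toReal
        = ENNReal.ofReal (Real.exp (-π * (x ⬝ᵥ M.mulVec x) * p.toReal)) := by
      intro x
      rw [Real.enorm_eq_ofReal (Real.exp_pos _).le,
        ENNReal.ofReal_rpow_of_pos (Real.exp_pos _), ← Real.exp_mul]
    simp_rw [h1]
    rw [lintegral_gauss_scaled hM hpr]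
    have hpos : 0 < p.toReal ^ (-(d : ℝ) / 2) * M.det ^ (-(1 : ℝ) / 2) := by
      have := hM.det_pos
      positivity
    rw [ENNReal.ofReal_rpow_of_pos hpos]
    congr 1
    rw [Real.mul_rpow (Real.rpow_nonneg hpr.le _) (Real.rpow_nonneg hM.det_pos.le _), ← Real.rpow_mul hpr.le,
      ← Real.rpow_mul hM.det_pos.le]
    unfold gaussConst
    rw [if_neg hptop]
    congr 1
    · congr 1
      field_simp
    · congr 1
      rw [one_div, ← mul_comm, neg_div, div_eq_mul_inv, mul_inv]
      ring

lemma dmv (M : Matrix (Fin d) (Fin d) ℝ) (x y : Fin d → ℝ) :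
    (M.mulVec x) ⬝ᵥ y = x ⬝ᵥ (Mᵀ.mulVec y) := by
  rw [dotProduct_comm, Matrix.dotProduct_mulVec, dotProduct_comm,
    ← Matrix.mulVec_transpose]

lemma expand_quad (P Q W : Matrix (Fin d) (Fin d) ℝ) (x ω : Fin d → ℝ) :
    (P.mulVec x + Q.mulVec ω) ⬝ᵥ W.mulVec (P.mulVec x + Q.mulVec ω)
      = x ⬝ᵥ ((Pᵀ * W * P).mulVec x) + x ⬝ᵥ ((Pᵀ * W * Q).mulVec ω)
        + ω ⬝ᵥ ((Qᵀ * W * P).mulVec x) + ω ⬝ᵥ ((Qᵀ * W * Q).mulVec ω) := by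
  rw [Matrix.mulVec_add, dotProduct_add, add_dotProduct, add_dotProduct]
  simp only [dmv, Matrix.mulVec_mulVec, Matrix.mul_assoc]
  ring

lemma quad_identity (A B C₀ D W₁ W₂ SIG BET OM : Matrix (Fin d) (Fin d) ℝ)
    (hW₁ : W₁.IsSymm) (hW₂ : W₂.IsSymm)
    (hSIGdef : SIG = Aᵀ * W₁ * A + C₀ᵀ * W₂ * C₀)
    (hBETdef : BET = Bᵀ * W₁ * A + Dᵀ * W₂ * C₀)
    (hOMdef : OM = Bᵀ * W₁ * B + Dᵀ * W₂ * D - BET * SIG⁻¹ * BETᵀ)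
    (hSIG : SIG.PosDef) (x ω : Fin d → ℝ) :
    (A.mulVec x + B.mulVec ω) ⬝ᵥ W₁.mulVec (A.mulVec x + B.mulVec ω)
      + (C₀.mulVec x + D.mulVec ω) ⬝ᵥ W₂.mulVec (C₀.mulVec x + D.mulVec ω)
    = (x + (SIG⁻¹ * BETᵀ).mulVec ω) ⬝ᵥ SIG.mulVec (x + (SIG⁻¹ * BETᵀ).mulVec ω)
      + ω ⬝ᵥ OM.mulVec ω := by
  have hdet : IsUnit SIG.det := isUnit_iff_ne_zero.mpr hSIG.det_pos.ne'
  have hSIGsymm : SIGᵀ = SIG := by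
    rw [← Matrix.conjTranspose_eq_transpose_of_trivial, hSIG.1]
  set m : Matrix (Fin d) (Fin d) ℝ := SIG⁻¹ * BETᵀ with hm
  have hBETT : BETᵀ = Aᵀ * W₁ * B + C₀ᵀ * W₂ * D := by
    rw [hBETdef]
    simp [Matrix.transpose_add, Matrix.transpose_mul, hW₁.eq, hW₂.eq, Matrix.mul_assoc]
  have h1 : SIG * m = BETᵀ := by
    rw [hm, ← Matrix.mul_assoc, Matrix.mul_nonsing_inv _ hdet, Matrix.one_mul]
  have hmT : mᵀ = BET * SIG⁻¹ := by
    rw [hm, Matrix.transpose_mul, Matrix.transpose_nonsing_inv, hSIGsymm, Matrix.transpose_transpose]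
  have h2 : mᵀ * SIG = BET := by
    rw [hmT, Matrix.mul_assoc, Matrix.nonsing_inv_mul _ hdet, Matrix.mul_one]
  have h3 : mᵀ * SIG * m = BET * SIG⁻¹ * BETᵀ := by
    rw [h2, hm, ← Matrix.mul_assoc]
  have h3' : BET * m = BET * SIG⁻¹ * BETᵀ := by rw [hm, ← Matrix.mul_assoc]
  have hx1 : x + m.mulVec ω = (1 : Matrix (Fin d) (Fin d) ℝ).mulVec x + m.mulVec ω := by
    rw [Matrix.one_mulVec]
  rw [hx1, expand_quad, expand_quad, expand_quad,
    Matrix.transpose_one, Matrix.one_mul, Matrix.mul_one, h1, h2, h3']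
  rw [hOMdef, hSIGdef, hBETT, hBETdef]
  simp only [Matrix.mul_one, Matrix.sub_mulVec, Matrix.add_mulVec, dotProduct_add,
    dotProduct_sub]
  ring

lemma gauss_cont (M : Matrix (Fin d) (Fin d) ℝ) :
    Continuous fun x : Fin d → ℝ => Real.exp (-π * (x ⬝ᵥ M.mulVec x)) := by
  have hmv : Continuous fun x : Fin d → ℝ => M.mulVec x := by
    have : Continuous (Matrix.toLin' M) := LinearMap.continuous_of_finiteDimensional _
    exact this.congr (fun x => Matrix.toLin'_apply M x)
  have hquadc : Continuous fun x : Fin d → ℝ => x ⬝ᵥ M.mulVec x := by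
    apply continuous_finset_sum
    intro i _
    exact (continuous_apply i).mul ((continuous_apply i).comp hmv)
  exact Real.continuous_exp.comp (continuous_const.mul hquadc)

lemma inner_norm {p : ℝ≥0∞} (hp : 1 ≤ p) {SIG : Matrix (Fin d) (Fin d) ℝ} (hSIG : SIG.PosDef)
    (a : Fin d → ℝ) :
    eLpNorm (fun x : Fin d → ℝ => Real.exp (-π * ((x + a) ⬝ᵥ SIG.mulVec (x + a)))) p volume
      = ENNReal.ofReal (gaussConst d p * SIG.det ^ (-(2 * p.toReal)⁻¹)) := by
  have hco : (fun x : Fin d → ℝ => Real.exp (-π * ((x + a) ⬝ᵥ SIG.mulVec (x + a))))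
      = (fun y : Fin d → ℝ => Real.exp (-π * (y ⬝ᵥ SIG.mulVec y))) ∘ (fun x => x + a) := rfl
  rw [hco, eLpNorm_comp_measurePreserving ((gauss_cont SIG).aestronglyMeasurable)
    (measurePreserving_add_right volume a), eLpNorm_gauss hp hSIG]

lemma qpart {q : ℝ≥0∞} (hq : 1 ≤ q) {M : Matrix (Fin d) (Fin d) ℝ} (hM : M.PosDef)
    {K : ℝ} (hK : 0 ≤ K) (g : (Fin d → ℝ) → ℝ≥0∞)
    (hg : ∀ ω, g ω = ENNReal.ofReal (K * Real.exp (-π * (ω ⬝ᵥ M.mulVec ω)))) :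
    (if q = ⊤ then essSup g volume
      else (∫⁻ ω, (g ω) ^ q.toReal ∂volume) ^ (1 / q.toReal))
    = ENNReal.ofReal K * ENNReal.ofReal (gaussConst d q * M.det ^ (-(2 * q.toReal)⁻¹)) := by
  have key : ∀ ω, g ω = ‖K * Real.exp (-π * (ω ⬝ᵥ M.mulVec ω))‖ₑ := by
    intro ω
    rw [hg ω, Real.enorm_eq_ofReal (by positivity)]
  have hstep : (if q = ⊤ then essSup g volume
      else (∫⁻ ω, (g ω) ^ q.toReal ∂volume) ^ (1 / q.toReal))
      = eLpNorm (fun ω : Fin d → ℝ => K * Real.exp (-π * (ω ⬝ᵥ M.mulVec ω))) q volume := by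
    by_cases hqt : q = ⊤
    · rw [if_pos hqt, hqt, eLpNorm_exponent_top, eLpNormEssSup]
      congr 1
      funext ω
      exact key ω
    · have hq0 : q ≠ 0 := by intro h0; rw [h0] at hq; simp at hq
      rw [if_neg hqt, eLpNorm_eq_lintegral_rpow_enorm_toReal hq0 hqt]
      congr 1
      apply lintegral_congr
      intro ω
      rw [key ω]
  rw [hstep]
  have hsmul : (fun ω : Fin d → ℝ => K * Real.exp (-π * (ω ⬝ᵥ M.mulVec ω)))
      = K • (fun ω : Fin d → ℝ => Real.exp (-π * (ω ⬝ᵥ M.mulVec ω))) := by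
    funext ω; simp [smul_eq_mul]
  rw [hsmul, eLpNorm_const_smul, eLpNorm_gauss hq hM, Real.enorm_eq_ofReal hK]

/-- Mixed norm of a dilated Gaussian: with `f(x,ω) = exp(−π x·Δ²x − π ω·E⁻²ω)` and the
invertible block matrix `S = [[A,B],[C,D]]`, if `Σ = AᵀΔ²A + CᵀE⁻²C` and
`Ω = BᵀΔ²B + DᵀE⁻²D − βΣ⁻¹βᵀ` (with `β = BᵀΔ²A + DᵀE⁻²C`) are positive definite, then
`‖f ∘ S⁻¹‖_{p,q} ≍ |det Σ|^{−1/(2p)} |det Ω|^{−1/(2q)}`, with constants depending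
only on `p, q, d`. -/
theorem stmt4 (d : ℕ) (p q : ℝ≥0∞) (hp : 1 ≤ p) (hq : 1 ≤ q) :
    ∃ c C : ℝ, 0 < c ∧ 0 < C ∧
      ∀ (A B C₀ D W₁ W₂ : Matrix (Fin d) (Fin d) ℝ),
        W₁.IsSymm → W₁.PosDef → W₂.IsSymm → W₂.PosDef →
        IsUnit (Matrix.fromBlocks A B C₀ D).det →
        ∀ SIG BET OM : Matrix (Fin d) (Fin d) ℝ,
          SIG = Aᵀ * W₁ * A + C₀ᵀ * W₂ * C₀ →
          BET = Bᵀ * W₁ * A + Dᵀ * W₂ * C₀ →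
          OM = Bᵀ * W₁ * B + Dᵀ * W₂ * D - BET * SIG⁻¹ * BETᵀ →
          SIG.PosDef → OM.PosDef →
          ENNReal.ofReal
              (c * (|SIG.det| ^ (-(2 * p.toReal)⁻¹) * |OM.det| ^ (-(2 * q.toReal)⁻¹)))
            ≤ mixedNorm p q (fun z : (Fin d → ℝ) × (Fin d → ℝ) =>
                Real.exp (-π * ((A.mulVec z.1 + B.mulVec z.2) ⬝ᵥ
                    W₁.mulVec (A.mulVec z.1 + B.mulVec z.2))
                  - π * ((C₀.mulVec z.1 + D.mulVec z.2) ⬝ᵥ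
                    W₂.mulVec (C₀.mulVec z.1 + D.mulVec z.2)))) ∧
          mixedNorm p q (fun z : (Fin d → ℝ) × (Fin d → ℝ) =>
                Real.exp (-π * ((A.mulVec z.1 + B.mulVec z.2) ⬝ᵥ
                    W₁.mulVec (A.mulVec z.1 + B.mulVec z.2))
                  - π * ((C₀.mulVec z.1 + D.mulVec z.2) ⬝ᵥ
                    W₂.mulVec (C₀.mulVec z.1 + D.mulVec z.2))))
            ≤ ENNReal.ofReal
              (C * (|SIG.det| ^ (-(2 * p.toReal)⁻¹) * |OM.det| ^ (-(2 * q.toReal)⁻¹))) := by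
  refine ⟨gaussConst d p * gaussConst d q, gaussConst d p * gaussConst d q,
    mul_pos (gaussConst_pos hp) (gaussConst_pos hq),
    mul_pos (gaussConst_pos hp) (gaussConst_pos hq), ?_⟩
  intro A B C₀ D W₁ W₂ hW₁s _hW₁ hW₂s _hW₂ _hS SIG BET OM hSIGdef hBETdef hOMdef hSIG hOM
  set K : ℝ := gaussConst d p * SIG.det ^ (-(2 * p.toReal)⁻¹) with hK
  have hKpos : 0 < K :=
    mul_pos (gaussConst_pos hp) (Real.rpow_pos_of_pos hSIG.det_pos _)
  have valeq : ∀ ω : Fin d → ℝ,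
      eLpNorm (fun x : Fin d → ℝ =>
        Real.exp (-π * ((A.mulVec x + B.mulVec ω) ⬝ᵥ
            W₁.mulVec (A.mulVec x + B.mulVec ω))
          - π * ((C₀.mulVec x + D.mulVec ω) ⬝ᵥ
            W₂.mulVec (C₀.mulVec x + D.mulVec ω)))) p volume
      = ENNReal.ofReal (K * Real.exp (-π * (ω ⬝ᵥ OM.mulVec ω))) := by
    intro ω
    have hpt : (fun x : Fin d → ℝ =>
        Real.exp (-π * ((A.mulVec x + B.mulVec ω) ⬝ᵥ
            W₁.mulVec (A.mulVec x + B.mulVec ω))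
          - π * ((C₀.mulVec x + D.mulVec ω) ⬝ᵥ
            W₂.mulVec (C₀.mulVec x + D.mulVec ω))))
        = (Real.exp (-π * (ω ⬝ᵥ OM.mulVec ω))) • (fun x : Fin d → ℝ =>
            Real.exp (-π * ((x + (SIG⁻¹ * BETᵀ).mulVec ω) ⬝ᵥ
              SIG.mulVec (x + (SIG⁻¹ * BETᵀ).mulVec ω)))) := by
      funext x
      simp only [Pi.smul_apply, smul_eq_mul, ← Real.exp_add]
      congr 1
      have hqi := quad_identity A B C₀ D W₁ W₂ SIG BET OM hW₁s hW₂s hSIGdef hBETdef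
        hOMdef hSIG x ω
      linear_combination (-π) * hqi
    rw [hpt, eLpNorm_const_smul, inner_norm hp hSIG,
      Real.enorm_eq_ofReal (Real.exp_pos _).le,
      ← ENNReal.ofReal_mul (Real.exp_pos _).le]
    congr 1
    rw [hK]; ring
  have hmix : mixedNorm p q (fun z : (Fin d → ℝ) × (Fin d → ℝ) =>
        Real.exp (-π * ((A.mulVec z.1 + B.mulVec z.2) ⬝ᵥ
            W₁.mulVec (A.mulVec z.1 + B.mulVec z.2))
          - π * ((C₀.mulVec z.1 + D.mulVec z.2) ⬝ᵥ
            W₂.mulVec (C₀.mulVec z.1 + D.mulVec z.2))))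
      = ENNReal.ofReal ((gaussConst d p * gaussConst d q) *
          (|SIG.det| ^ (-(2 * p.toReal)⁻¹) * |OM.det| ^ (-(2 * q.toReal)⁻¹))) := by
    unfold mixedNorm
    rw [qpart hq hOM hKpos.le _ (fun ω => valeq ω)]
    rw [← ENNReal.ofReal_mul hKpos.le]
    congr 1
    rw [hK, abs_of_pos hSIG.det_pos, abs_of_pos hOM.det_pos]
    ring
  exact ⟨hmix.ge, hmix.le⟩
end

section
/- For the standard symplectic matrix J on ℝ^{2d} (J(x,ω) = (ω,−x)) and p ≠ q in [1,∞], the map D_J : f ↦ f ∘ J⁻¹ is not everywhere defined on L^{p,q}(ℝ^{2d}): there exists f ∈ L^{p,q}(ℝ^{2d}) with f ∘ J⁻¹ ∉ L^{p,q}(ℝ^{2d}). -/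
/-!
For `f = a ⊗ b` one has `‖f‖_{p,q} = ‖a‖_p ‖b‖_q`, while `(f ∘ J⁻¹)(x, ω) = b x · a (-ω)`, so
`‖f ∘ J⁻¹‖_{p,q} = ‖b‖_p ‖a‖_q`. It therefore suffices to find `a ∈ L^p`, `b ∈ L^q` with
`‖b‖_p ‖a‖_q = ∞`: one of them is the indicator of the unit cube, the other lies in `L^q \ L^p`
(in `L^p \ L^q` when `p = ∞`). For finite exponents `r ≠ s`, a function in `L^r \ L^s` is
`t ↦ t^{-1/s}` on `(0,1)` or on `(1,∞)`, placed in the first coordinate and cut off by a cube in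
the others.
-/

open MeasureTheory
open scoped ENNReal

open Set

section LpNorm

variable {α β : Type*} [MeasurableSpace α] [MeasurableSpace β] {μ : Measure α} {ν : Measure β}
  {r : ℝ≥0∞}

lemma eLpNorm_ennreal_const_mul {F : α → ℝ≥0∞} (hF : AEMeasurable F μ) (c : ℝ≥0∞) :
    eLpNorm (fun x => c * F x) r μ = c * eLpNorm F r μ := by
  rcases eq_or_ne r 0 with rfl | hr0
  · simp
  rcases eq_or_ne r ⊤ with rfl | hr
  · simp only [eLpNorm_exponent_top, eLpNormEssSup_eq_essSup_enorm, enorm_eq_self,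
      ENNReal.essSup_const_mul]
  have hr' : 0 < r.toReal := ENNReal.toReal_pos hr0 hr
  simp only [eLpNorm_eq_lintegral_rpow_enorm_toReal hr0 hr, enorm_eq_self,
    ENNReal.mul_rpow_of_nonneg _ _ hr'.le]
  rw [lintegral_const_mul'' _ (hF.pow_const _), ENNReal.mul_rpow_of_nonneg _ _ (by positivity),
    one_div, ENNReal.rpow_rpow_inv hr'.ne']

lemma eLpNorm_prod_mul {𝕜 : Type*} [NormedRing 𝕜] [NormMulClass 𝕜] [SFinite ν] {f : α → 𝕜}
    {g : β → 𝕜} (hf : AEStronglyMeasurable f μ) (hg : AEStronglyMeasurable g ν) (hr0 : r ≠ 0)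
    (hr : r ≠ ⊤) :
    eLpNorm (fun z : α × β => f z.1 * g z.2) r (μ.prod ν) = eLpNorm f r μ * eLpNorm g r ν := by
  have hr' : 0 < r.toReal := ENNReal.toReal_pos hr0 hr
  simp only [eLpNorm_eq_lintegral_rpow_enorm_toReal hr0 hr, enorm_mul,
    ENNReal.mul_rpow_of_nonneg _ _ hr'.le]
  rw [lintegral_prod_mul (hf.enorm.pow_const _) (hg.enorm.pow_const _),
    ENNReal.mul_rpow_of_nonneg _ _ (by positivity)]

end LpNorm

lemma exists_integrableOn_rpow_not_integrableOn_rpow_neg_one {γ : ℝ} (hγ : γ ≠ -1) :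
    ∃ T ⊆ Ioi (0 : ℝ), MeasurableSet T ∧ IntegrableOn (fun t => t ^ γ) T ∧
      ¬ IntegrableOn (fun t => t ^ (-1 : ℝ)) T := by
  rcases hγ.lt_or_gt with hγ | hγ
  · refine ⟨Ioi 1, Ioi_subset_Ioi zero_le_one, measurableSet_Ioi,
      (integrableOn_Ioi_rpow_iff zero_lt_one).2 hγ, ?_⟩
    rw [integrableOn_Ioi_rpow_iff zero_lt_one]
    exact lt_irrefl _
  · refine ⟨Ioo 0 1, Ioo_subset_Ioi_self, measurableSet_Ioo,
      (intervalIntegral.integrableOn_Ioo_rpow_iff zero_lt_one).2 hγ, ?_⟩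
    rw [intervalIntegral.integrableOn_Ioo_rpow_iff zero_lt_one]
    exact lt_irrefl _

lemma exists_memLp_eLpNorm_eq_top_real {r s : ℝ≥0∞} (hr0 : r ≠ 0) (hr : r ≠ ⊤) (hs0 : s ≠ 0)
    (hs : s ≠ ⊤) (hrs : r ≠ s) :
    ∃ h : ℝ → ℂ, MemLp h r volume ∧ eLpNorm h s volume = ⊤ := by
  have hs' : 0 < s.toReal := ENNReal.toReal_pos hs0 hs
  have hexp_s : -s.toReal⁻¹ * s.toReal = -1 := by rw [neg_mul, inv_mul_cancel₀ hs'.ne']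
  obtain ⟨T, hT0, hT, hint, hnint⟩ :=
    exists_integrableOn_rpow_not_integrableOn_rpow_neg_one (γ := -s.toReal⁻¹ * r.toReal) <| by
      rw [← hexp_s]
      exact fun heq => hrs ((ENNReal.toReal_eq_toReal_iff' hr hs).1
        (mul_left_cancel₀ (neg_ne_zero.2 (inv_ne_zero hs'.ne')) heq))
  let h : ℝ → ℂ := T.indicator fun t => ((t ^ (-s.toReal⁻¹) : ℝ) : ℂ)
  have hmeas : AEStronglyMeasurable h volume :=
    ((Complex.measurable_ofReal.comp (measurable_id.pow_const _)).indicator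
      hT).aestronglyMeasurable
  have hmemLp : ∀ u : ℝ≥0∞, u ≠ 0 → u ≠ ⊤ →
      (MemLp h u volume ↔ IntegrableOn (fun t => t ^ (-s.toReal⁻¹ * u.toReal)) T) := by
    intro u hu0 hu
    rw [← integrable_norm_rpow_iff hmeas hu0 hu, ← integrable_indicator_iff hT]
    congr! 1
    funext t
    by_cases ht : t ∈ T
    · have ht0 : 0 < t := hT0 ht
      simp [h, indicator_of_mem ht, abs_of_pos (Real.rpow_pos_of_pos ht0 _),
        ← Real.rpow_mul ht0.le]
    · simp [h, indicator_of_notMem ht, Real.zero_rpow (ENNReal.toReal_ne_zero.2 ⟨hu0, hu⟩)]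
  refine ⟨h, (hmemLp r hr0 hr).2 hint, ?_⟩
  by_contra hne
  have hsint := (hmemLp s hs0 hs).1 ⟨hmeas, lt_top_iff_ne_top.2 hne⟩
  rw [hexp_s] at hsint
  exact hnint hsint

lemma eLpNorm_indicator_Icc_zero_one {ι E : Type*} [Fintype ι] [NormedAddCommGroup E] (c : E)
    {r : ℝ≥0∞} (hr : r ≠ 0) :
    eLpNorm ((Icc (0 : ι → ℝ) 1).indicator fun _ => c) r volume = ‖c‖ₑ := by
  have hvol : volume (Icc (0 : ι → ℝ) 1) = 1 := by simp [Real.volume_Icc_pi]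
  rw [eLpNorm_indicator_const' measurableSet_Icc (by simp [hvol]) hr, hvol, ENNReal.one_rpow,
    mul_one]

lemma exists_memLp_eLpNorm_eq_top {d : ℕ} (hd : d ≠ 0) {r s : ℝ≥0∞} (hr0 : r ≠ 0) (hs0 : s ≠ 0)
    (hs : s ≠ ⊤) (hrs : r ≠ s) :
    ∃ g : (Fin d → ℝ) → ℂ, MemLp g r volume ∧ eLpNorm g s volume = ⊤ := by
  rcases eq_or_ne r ⊤ with rfl | hr
  · refine ⟨fun _ => 1, memLp_top_const 1, ?_⟩
    have : NeZero d := ⟨hd⟩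
    rw [eLpNorm_const _ hs0 (NeZero.ne volume), measure_univ_of_isAddLeftInvariant,
      ENNReal.top_rpow_of_pos (by simp [ENNReal.toReal_pos hs0 hs])]
    simp
  obtain ⟨m, rfl⟩ := Nat.exists_eq_succ_of_ne_zero hd
  obtain ⟨h, hh, hhs⟩ := exists_memLp_eLpNorm_eq_top_real hr0 hr hs0 hs hrs
  let k := (Icc (0 : Fin m → ℝ) 1).indicator fun _ => (1 : ℂ)
  have hk : AEStronglyMeasurable k volume :=
    (measurable_const.indicator measurableSet_Icc).aestronglyMeasurable
  let F : ℝ × (Fin m → ℝ) → ℂ := fun z => h z.1 * k z.2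
  have hF : AEStronglyMeasurable F volume := hh.1.comp_fst.mul hk.comp_snd
  let e := MeasurableEquiv.piFinSuccAbove (fun _ : Fin (m + 1) => ℝ) 0
  have he : MeasurePreserving e := volume_preserving_piFinSuccAbove _ 0
  have hnorm : ∀ u : ℝ≥0∞, u ≠ 0 → u ≠ ⊤ →
      eLpNorm (F ∘ e) u volume = eLpNorm h u volume :=
    fun u hu0 hu => by
      rw [eLpNorm_comp_measurePreserving hF he, Measure.volume_eq_prod,
        eLpNorm_prod_mul hh.1 hk hu0 hu, eLpNorm_indicator_Icc_zero_one _ hu0, enorm_one, mul_one]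
  refine ⟨F ∘ e, ⟨hF.comp_measurePreserving he, ?_⟩, ?_⟩
  · rw [hnorm r hr0 hr]
    exact hh.2
  · rw [hnorm s hs0 hs, hhs]

section MixedNorm

variable {d : ℕ} {p q : ℝ≥0∞}

lemma mixedNorm_eq_eLpNorm {E : Type*} [NormedAddCommGroup E] (hq : q ≠ 0)
    (f : (Fin d → ℝ) × (Fin d → ℝ) → E) :
    mixedNorm p q f = eLpNorm (fun ω => eLpNorm (fun x => f (x, ω)) p volume) q volume := by
  rw [mixedNorm]
  split_ifs with hq_top
  · simp [hq_top, eLpNormEssSup_eq_essSup_enorm]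
  · simp [eLpNorm_eq_lintegral_rpow_enorm_toReal hq hq_top]

lemma mixedNorm_mul {𝕜 : Type*} [NormedField 𝕜] (hq : q ≠ 0) (a : (Fin d → ℝ) → 𝕜)
    {b : (Fin d → ℝ) → 𝕜} (hb : AEStronglyMeasurable b volume) :
    mixedNorm p q (fun z => a z.1 * b z.2) = eLpNorm a p volume * eLpNorm b q volume := by
  have inner (ω : Fin d → ℝ) :
      eLpNorm (fun x => a x * b ω) p volume = eLpNorm a p volume * ‖b ω‖ₑ := by
    rw [mul_comm, ← eLpNorm_const_smul]
    congr with x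
    exact mul_comm _ _
  rw [mixedNorm_eq_eLpNorm hq]
  simp only [inner]
  rw [eLpNorm_ennreal_const_mul hb.enorm, eLpNorm_enorm]

end MixedNorm

lemma exists_memLp_memLp_eLpNorm_mul_eq_top {d : ℕ} (hd : d ≠ 0) {p q : ℝ≥0∞} (hp : p ≠ 0)
    (hq : q ≠ 0) (hpq : p ≠ q) :
    ∃ a b : (Fin d → ℝ) → ℂ,
      MemLp a p volume ∧ MemLp b q volume ∧ eLpNorm b p volume * eLpNorm a q volume = ⊤ := by
  let χ := (Icc (0 : Fin d → ℝ) 1).indicator fun _ => (1 : ℂ)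
  have hχ (r : ℝ≥0∞) : MemLp χ r volume :=
    memLp_indicator_const r measurableSet_Icc 1 (Or.inr (by simp [Real.volume_Icc_pi]))
  rcases eq_or_ne p ⊤ with rfl | hp_top
  · obtain ⟨a, ha, haq⟩ := exists_memLp_eLpNorm_eq_top hd hp hq hpq.symm hpq
    refine ⟨a, χ, ha, hχ q, ?_⟩
    rw [haq, eLpNorm_indicator_Icc_zero_one _ hp, enorm_one, one_mul]
  · obtain ⟨b, hb, hbp⟩ := exists_memLp_eLpNorm_eq_top hd hq hp hp_top hpq.symm
    refine ⟨χ, b, hχ p, hb, ?_⟩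
    rw [hbp, eLpNorm_indicator_Icc_zero_one _ hq, enorm_one, ENNReal.top_mul one_ne_zero]

/-- For the standard symplectic matrix `J(x,ω) = (ω,−x)` (so `J⁻¹(x,ω) = (−ω,x)`) and
`p ≠ q`, the dilation `D_J : f ↦ f ∘ J⁻¹` is not everywhere defined on `L^{p,q}(ℝ^{2d})`:
some `f ∈ L^{p,q}` has `f ∘ J⁻¹ ∉ L^{p,q}`. -/
theorem stmt5 (d : ℕ) (hd : 0 < d) (p q : ℝ≥0∞) (hp : 1 ≤ p) (hq : 1 ≤ q) (hpq : p ≠ q) :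
    ∃ f : (Fin d → ℝ) × (Fin d → ℝ) → ℂ,
      AEStronglyMeasurable f volume ∧ mixedNorm p q f < ⊤ ∧
      mixedNorm p q (fun z => f (-z.2, z.1)) = ⊤ := by
  have hq0 : q ≠ 0 := (zero_lt_one.trans_le hq).ne'
  obtain ⟨a, b, ha, hb, hab⟩ :=
    exists_memLp_memLp_eLpNorm_mul_eq_top hd.ne' (zero_lt_one.trans_le hp).ne' hq0 hpq
  have hneg := Measure.measurePreserving_neg (volume : Measure (Fin d → ℝ))
  have ha_neg : AEStronglyMeasurable (fun ω => a (-ω)) volume := ha.1.comp_measurePreserving hneg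
  refine ⟨fun z => a z.1 * b z.2, ha.1.comp_fst.mul hb.1.comp_snd, ?_, ?_⟩
  · rw [mixedNorm_mul hq0 a hb.1]
    exact ENNReal.mul_lt_top ha.2 hb.2
  · simp_rw [mul_comm (a _)]
    rw [mixedNorm_mul hq0 b ha_neg, ← hab]
    exact congrArg _ (eLpNorm_comp_measurePreserving ha.1 hneg)
end

section
/- Let m : ℝ^{2d} → (0,∞) be measurable, S invertible, and suppose T := ess inf_{z} m(z)/m(S⁻¹ z) > 0. If the dilation D_S : L^{p,q}(ℝ^{2d}) → L^{p,q}(ℝ^{2d}) is not everywhere defined (i.e., there exists f ∈ L^{p,q} with f ∘ S⁻¹ ∉ L^{p,q}), then the weighted dilation (D_S)_m : L^{p,q}_m(ℝ^{2d}) → L^{p,q}_m(ℝ^{2d}), f ↦ f ∘ S⁻¹, is also not everywhere defined. -/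
/-! Given `f ∈ L^{p,q}` with `f ∘ S⁻¹ ∉ L^{p,q}`, the witness is `g = f / m`: then `g · m = f`,
while `(g ∘ S⁻¹) · m = (f ∘ S⁻¹) · m / (m ∘ S⁻¹)` is a.e. at least `c · |f ∘ S⁻¹|` for any `0 < c < T`,
and the mixed norm is monotone and positively homogeneous. -/

open MeasureTheory
open scoped ENNReal

lemma ae_ae_of_ae_volume_prod {d : ℕ} {P : (Fin d → ℝ) × (Fin d → ℝ) → Prop}
    (h : ∀ᵐ z ∂volume, P z) : ∀ᵐ ω ∂volume, ∀ᵐ x ∂volume, P (x, ω) := by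
  rw [Measure.volume_eq_prod] at h
  exact Measure.ae_ae_of_ae_prod <|
    Measure.measurePreserving_swap.quasiMeasurePreserving.tendsto_ae.eventually h

section

variable {d : ℕ} {E F : Type*} [NormedAddCommGroup E] [NormedAddCommGroup F] {p q : ℝ≥0∞}

lemma mixedNorm_mono_ae {f : (Fin d → ℝ) × (Fin d → ℝ) → E}
    {g : (Fin d → ℝ) × (Fin d → ℝ) → F} (h : ∀ᵐ z ∂volume, ‖f z‖ ≤ ‖g z‖) :
    mixedNorm p q f ≤ mixedNorm p q g := by
  have hsec : ∀ᵐ ω ∂volume, eLpNorm (fun x => f (x, ω)) p volume ≤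
      eLpNorm (fun x => g (x, ω)) p volume := by
    filter_upwards [ae_ae_of_ae_volume_prod h] with ω hω
    exact eLpNorm_mono_ae hω
  unfold mixedNorm
  split_ifs
  · exact essSup_mono_ae hsec
  · gcongr ?_ ^ _
    exact lintegral_mono_ae (hsec.mono fun ω hω => by gcongr)

lemma mixedNorm_const_smul {𝕜 : Type*} [NormedField 𝕜] [NormedSpace 𝕜 E] (hq : q ≠ 0) (c : 𝕜)
    (f : (Fin d → ℝ) × (Fin d → ℝ) → E) :
    mixedNorm p q (c • f) = ‖c‖ₑ * mixedNorm p q f := by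
  have hsec (ω : Fin d → ℝ) : eLpNorm (fun x => (c • f) (x, ω)) p volume =
      ‖c‖ₑ * eLpNorm (fun x => f (x, ω)) p volume :=
    eLpNorm_const_smul c (fun x => f (x, ω)) p volume
  simp only [mixedNorm, hsec]
  split_ifs with hqt
  · exact ENNReal.essSup_const_mul
  · have hqr : 0 < q.toReal := ENNReal.toReal_pos hq hqt
    simp_rw [ENNReal.mul_rpow_of_nonneg _ _ hqr.le]
    rw [lintegral_const_mul' _ _ (by simp [hqr.le]),
      ENNReal.mul_rpow_of_nonneg _ _ (by positivity), ← ENNReal.rpow_mul,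
      mul_one_div_cancel hqr.ne', ENNReal.rpow_one]

end

lemma exists_pos_ae_le_of_pos_essInf {α : Type*} [MeasurableSpace α] {μ : Measure α}
    {r : α → ℝ} (h : 0 < essInf (fun z => ENNReal.ofReal (r z)) μ) :
    ∃ c : ℝ, 0 < c ∧ ∀ᵐ z ∂μ, c ≤ r z := by
  obtain ⟨c, -, hc0, hcT⟩ := ENNReal.lt_iff_exists_real_btwn.mp h
  refine ⟨c, ENNReal.ofReal_pos.mp hc0, ?_⟩
  filter_upwards [ae_essInf_le (f := fun z => ENNReal.ofReal (r z)) (μ := μ)] with z hz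
  exact (ENNReal.ofReal_le_ofReal_iff'.mp (hcT.le.trans hz)).resolve_right
    (ENNReal.ofReal_pos.mp hc0).not_ge

theorem stmt8_general (d : ℕ) (p q : ℝ≥0∞) (hq : 1 ≤ q)
    (m : (Fin d → ℝ) × (Fin d → ℝ) → ℝ) (hm : Measurable m) (hmpos : ∀ z, 0 < m z)
    (S : ((Fin d → ℝ) × (Fin d → ℝ)) ≃ₗ[ℝ] ((Fin d → ℝ) × (Fin d → ℝ)))
    (hT : 0 < essInf (fun z => ENNReal.ofReal (m z / m (S.symm z))) volume)
    (hDS : ∃ f : ((Fin d → ℝ) × (Fin d → ℝ)) → ℂ, AEStronglyMeasurable f volume ∧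
      mixedNorm p q f < ⊤ ∧ mixedNorm p q (fun z => f (S.symm z)) = ⊤) :
    ∃ g : ((Fin d → ℝ) × (Fin d → ℝ)) → ℂ, AEStronglyMeasurable g volume ∧
      mixedNorm p q (fun z => g z * (m z : ℂ)) < ⊤ ∧
      mixedNorm p q (fun z => g (S.symm z) * (m z : ℂ)) = ⊤ := by
  obtain ⟨f, hf_meas, hf_fin, hfS_inf⟩ := hDS
  obtain ⟨c, hc, hratio⟩ := exists_pos_ae_le_of_pos_essInf hT
  have hm_ne (z) : (m z : ℂ) ≠ 0 := Complex.ofReal_ne_zero.mpr (hmpos z).ne'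
  refine ⟨fun z => f z / m z, ?_, ?_, ?_⟩
  · exact hf_meas.div₀ (Complex.measurable_ofReal.comp hm).aestronglyMeasurable
  · rwa [funext fun z => div_mul_cancel₀ (f z) (hm_ne z)]
  · have hdom : ∀ᵐ z ∂volume,
        ‖(c : ℂ) • f (S.symm z)‖ ≤ ‖f (S.symm z) / m (S.symm z) * m z‖ := by
      filter_upwards [hratio] with z hz
      rw [div_mul_eq_mul_div, mul_div_assoc, ← Complex.ofReal_div, smul_eq_mul, norm_mul,
        norm_mul, mul_comm, Complex.norm_real, Complex.norm_real, Real.norm_of_nonneg hc.le,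
        Real.norm_of_nonneg (div_pos (hmpos _) (hmpos _)).le]
      gcongr
    refine top_le_iff.mp ?_
    calc ⊤ = ‖(c : ℂ)‖ₑ * mixedNorm p q (fun z => f (S.symm z)) := by
          rw [hfS_inf, ENNReal.mul_top (by simpa using hc.ne')]
      _ = mixedNorm p q ((c : ℂ) • fun z => f (S.symm z)) :=
          (mixedNorm_const_smul (by positivity) _ _).symm
      _ ≤ _ := mixedNorm_mono_ae hdom

/-- If `ess inf_z m(z)/m(S⁻¹z) > 0` and the unweighted dilation `D_S : f ↦ f ∘ S⁻¹` is
not everywhere defined on `L^{p,q}(ℝ^{2d})`, then the weighted dilation is not everywhere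
defined on `L^{p,q}_m(ℝ^{2d})` either (the `L^{p,q}_m` norm of `g` being `‖g·m‖_{p,q}`). -/
theorem stmt8 (d : ℕ) (p q : ℝ≥0∞) (hp : 1 ≤ p) (hq : 1 ≤ q)
    (m : (Fin d → ℝ) × (Fin d → ℝ) → ℝ) (hm : Measurable m) (hmpos : ∀ z, 0 < m z)
    (S : ((Fin d → ℝ) × (Fin d → ℝ)) ≃ₗ[ℝ] ((Fin d → ℝ) × (Fin d → ℝ)))
    (hT : 0 < essInf (fun z => ENNReal.ofReal (m z / m (S.symm z))) volume)
    (hDS : ∃ f : ((Fin d → ℝ) × (Fin d → ℝ)) → ℂ, AEStronglyMeasurable f volume ∧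
      mixedNorm p q f < ⊤ ∧ mixedNorm p q (fun z => f (S.symm z)) = ⊤) :
    ∃ g : ((Fin d → ℝ) × (Fin d → ℝ)) → ℂ, AEStronglyMeasurable g volume ∧
      mixedNorm p q (fun z => g z * (m z : ℂ)) < ⊤ ∧
      mixedNorm p q (fun z => g (S.symm z) * (m z : ℂ)) = ⊤ :=
  stmt8_general d p q hq m hm hmpos S hT hDS
end

section
/- Let p_s(x,ω) = (1+‖x‖)^s for (x,ω) ∈ ℝ^d × ℝ^d and s ≠ 0, and let S = [[A,B],[C,D]] be an invertible 2d×2d real matrix in block form. Then p_s ∘ S ≍ p_s (i.e., there exist 0 < c ≤ C with c·p_s ≤ p_s∘S ≤ C·p_s everywhere) if and only if B = 0. -/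
open Real Matrix

/-- Auxiliary: any matrix acts with a linear norm bound on Euclidean space. -/
lemma aux_opNorm_bound (d : ℕ) (M : Matrix (Fin d) (Fin d) ℝ) :
    ∃ K : ℝ, 0 ≤ K ∧ ∀ x : EuclideanSpace ℝ (Fin d),
      ‖Matrix.toEuclideanLin M x‖ ≤ K * ‖x‖ :=
  ⟨‖LinearMap.toContinuousLinearMap (Matrix.toEuclideanLin M)‖, norm_nonneg _, fun x =>
    (LinearMap.toContinuousLinearMap (Matrix.toEuclideanLin M)).le_opNorm x⟩

/-- For the weight `p_s(x,ω) = (1+‖x‖)^s`, `s ≠ 0`, and an invertible block matrix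
`S = [[A,B],[C,D]]`, the equivalence `p_s ∘ S ≍ p_s` holds iff `B = 0`. -/
theorem stmt10 (d : ℕ) (s : ℝ) (hs : s ≠ 0)
    (A B C₀ D : Matrix (Fin d) (Fin d) ℝ)
    (hS : IsUnit (Matrix.fromBlocks A B C₀ D).det) :
    (∃ c C : ℝ, 0 < c ∧ 0 < C ∧
        ∀ x ω : EuclideanSpace ℝ (Fin d),
          c * (1 + ‖x‖) ^ s
              ≤ (1 + ‖Matrix.toEuclideanLin A x + Matrix.toEuclideanLin B ω‖) ^ s ∧
            (1 + ‖Matrix.toEuclideanLin A x + Matrix.toEuclideanLin B ω‖) ^ s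
              ≤ C * (1 + ‖x‖) ^ s)
      ↔ B = 0 := by
  constructor
  · -- forward direction: the bounds force `B = 0`.
    rintro ⟨c, C, hc, hC, h⟩
    have hB : Matrix.toEuclideanLin B = 0 := by
      apply LinearMap.ext
      intro ω
      rw [LinearMap.zero_apply]
      by_contra hω
      set b : EuclideanSpace ℝ (Fin d) := Matrix.toEuclideanLin B ω with hb
      have hr : 0 < ‖b‖ := norm_pos_iff.mpr hω
      -- for every `t ≥ 0`, plugging in `x = 0`, `ω' = t • ω` gives `c ≤ (1+t‖b‖)^s ≤ C`.
      have key : ∀ t : ℝ, 0 ≤ t → c ≤ (1 + t * ‖b‖) ^ s ∧ (1 + t * ‖b‖) ^ s ≤ C := by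
        intro t ht
        have := h 0 (t • ω)
        simp only [map_zero, _root_.map_smul, zero_add, norm_zero, norm_smul,
          Real.norm_eq_abs, abs_of_nonneg ht] at this
        simpa [Real.one_rpow, ← hb] using this
      rcases lt_or_gt_of_ne hs with hneg | hpos
      · -- `s < 0`: make `(1+t‖b‖)^s` smaller than `c`.
        set t : ℝ := c ^ s⁻¹ / ‖b‖ with htdef
        have ht : 0 ≤ t := div_nonneg (Real.rpow_nonneg hc.le _) hr.le
        have htr : t * ‖b‖ = c ^ s⁻¹ := div_mul_cancel₀ _ hr.ne'
        have h1 : c ^ s⁻¹ < 1 + t * ‖b‖ := by rw [htr]; linarith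
        have h2 : (1 + t * ‖b‖) ^ s < (c ^ s⁻¹) ^ s :=
          Real.rpow_lt_rpow_of_neg (Real.rpow_pos_of_pos hc _) h1 hneg
        rw [Real.rpow_inv_rpow hc.le hs] at h2
        exact absurd ((key t ht).1) (not_le.mpr h2)
      · -- `s > 0`: make `(1+t‖b‖)^s` bigger than `C`.
        set t : ℝ := C ^ s⁻¹ / ‖b‖ with htdef
        have ht : 0 ≤ t := div_nonneg (Real.rpow_nonneg hC.le _) hr.le
        have htr : t * ‖b‖ = C ^ s⁻¹ := div_mul_cancel₀ _ hr.ne'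
        have h1 : C ^ s⁻¹ < 1 + t * ‖b‖ := by rw [htr]; linarith
        have h2 : (C ^ s⁻¹) ^ s < (1 + t * ‖b‖) ^ s :=
          Real.rpow_lt_rpow (Real.rpow_nonneg hC.le _) h1 hpos
        rw [Real.rpow_inv_rpow hC.le hs] at h2
        exact absurd ((key t ht).2) (not_le.mpr h2)
    exact Matrix.toEuclideanLin.injective (by simpa using hB)
  · -- backward direction: `B = 0` and `S` invertible force `A` invertible, giving the bounds.
    rintro rfl
    -- `A` is invertible
    have hdet : IsUnit A.det := by
      rw [Matrix.det_fromBlocks_zero₁₂] at hS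
      exact isUnit_of_mul_isUnit_left hS
    -- the two one-sided norm bounds
    obtain ⟨K₁, hK₁, hK₁'⟩ := aux_opNorm_bound d A
    obtain ⟨K₂, hK₂, hK₂'⟩ := aux_opNorm_bound d A⁻¹
    have hinv : ∀ x : EuclideanSpace ℝ (Fin d),
        Matrix.toEuclideanLin A⁻¹ (Matrix.toEuclideanLin A x) = x := by
      intro x
      simp [Matrix.toEuclideanLin_apply, Matrix.mulVec_mulVec, Matrix.nonsing_inv_mul A hdet]
    set K : ℝ := max (max K₁ K₂) 1 with hKdef
    have hK1 : 1 ≤ K := le_max_right _ _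
    have hK0 : 0 < K := lt_of_lt_of_le one_pos hK1
    -- sandwich for the un-powered quantities
    have sandwich : ∀ x : EuclideanSpace ℝ (Fin d),
        (1 + ‖x‖) / K ≤ 1 + ‖Matrix.toEuclideanLin A x‖ ∧
        1 + ‖Matrix.toEuclideanLin A x‖ ≤ K * (1 + ‖x‖) := by
      intro x
      have hA1 : ‖Matrix.toEuclideanLin A x‖ ≤ K * ‖x‖ := by
        refine (hK₁' x).trans (mul_le_mul_of_nonneg_right ?_ (norm_nonneg _))
        exact le_trans (le_max_left _ _) (le_max_left _ _)
      have hA2 : ‖x‖ ≤ K * ‖Matrix.toEuclideanLin A x‖ := by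
        have := hK₂' (Matrix.toEuclideanLin A x)
        rw [hinv x] at this
        refine this.trans (mul_le_mul_of_nonneg_right ?_ (norm_nonneg _))
        exact le_trans (le_max_right _ _) (le_max_left _ _)
      constructor
      · rw [div_le_iff₀ hK0]
        nlinarith [norm_nonneg x, norm_nonneg (Matrix.toEuclideanLin A x)]
      · nlinarith [norm_nonneg x, norm_nonneg (Matrix.toEuclideanLin A x)]
    refine ⟨min (K ^ (-s)) (K ^ s), max (K ^ (-s)) (K ^ s),
      lt_min (Real.rpow_pos_of_pos hK0 _) (Real.rpow_pos_of_pos hK0 _),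
      lt_max_of_lt_left (Real.rpow_pos_of_pos hK0 _), fun x ω => ?_⟩
    simp only [map_zero, LinearMap.zero_apply, add_zero]
    set u : ℝ := 1 + ‖x‖ with hu
    set v : ℝ := 1 + ‖Matrix.toEuclideanLin A x‖ with hv
    have hu0 : 0 < u := by positivity
    have hv0 : 0 < v := by positivity
    obtain ⟨hlo, hhi⟩ := sandwich x
    have hKs : (K * u) ^ s = K ^ s * u ^ s := Real.mul_rpow hK0.le hu0.le
    have hKd : (u / K) ^ s = K ^ (-s) * u ^ s := by
      rw [Real.div_rpow hu0.le hK0.le, Real.rpow_neg hK0.le]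
      ring
    rcases lt_or_gt_of_ne hs with hneg | hpos
    · -- s < 0
      have h1 : (K * u) ^ s ≤ v ^ s := Real.rpow_le_rpow_of_nonpos hv0 hhi hneg.le
      have h2 : v ^ s ≤ (u / K) ^ s :=
        Real.rpow_le_rpow_of_nonpos (by positivity) hlo hneg.le
      rw [hKs] at h1; rw [hKd] at h2
      constructor
      · refine le_trans (mul_le_mul_of_nonneg_right (min_le_right _ _)
          (Real.rpow_nonneg hu0.le _)) h1
      · refine le_trans h2 (mul_le_mul_of_nonneg_right (le_max_left _ _)
          (Real.rpow_nonneg hu0.le _))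
    · -- s > 0
      have h1 : (u / K) ^ s ≤ v ^ s := Real.rpow_le_rpow (by positivity) hlo hpos.le
      have h2 : v ^ s ≤ (K * u) ^ s := Real.rpow_le_rpow hv0.le hhi hpos.le
      rw [hKd] at h1; rw [hKs] at h2
      constructor
      · refine le_trans (mul_le_mul_of_nonneg_right (min_le_left _ _)
          (Real.rpow_nonneg hu0.le _)) h1
      · refine le_trans h2 (mul_le_mul_of_nonneg_right (le_max_right _ _)
          (Real.rpow_nonneg hu0.le _))
end
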